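/- Let v₃(θ) be defined by v₃(0) = 0 and v₃'(θ) = λ₁ cos θ sin θ (cos θ · v₂'(θ) + 2 sin θ · v₂(θ)) + λ₂ cos²θ sin²θ, where v₂(θ) = λ₁ ∫₀^θ cos s sin² s ds. Then v₃(2π) = c₃ λ₂ where c₃ = ∫₀^{2π} cos²θ sin²θ dθ = π/4 ≠ 0. -/

import Mathlib

/-!
Solving for `v₂` gives `v₂ = λ₁ sin³θ / 3`, and then, using `cos² = 1 - sin²`,
`v₃' = λ₁² (sin³θ - sin⁵θ / 3) cos θ + λ₂ cos²θ sin²θ`.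
The `λ₁²` part is of the form `g (sin θ) cos θ`, whose integral over a period vanishes by the
substitution `u = sin θ`; only the `λ₂` part survives, and `∫₀^{2π} cos² sin² = π / 4`.
-/

open Real intervalIntegral

theorem integral_comp_sin_mul_cos_of_sin_eq {a b : ℝ} {g : ℝ → ℝ} (hg : Continuous g)
    (hab : sin a = sin b) : ∫ x in a..b, g (sin x) * cos x = 0 := by
  have := integral_comp_mul_deriv (a := a) (b := b) (fun x _ => hasDerivAt_sin x)
    continuousOn_cos hg
  simpa [hab] using this

theorem integral_cos_mul_sin_sq (θ : ℝ) :
    ∫ s in (0:ℝ)..θ, cos s * sin s ^ 2 = sin θ ^ 3 / 3 := by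
  simp [mul_comm (cos _)]

theorem integral_cos_sq_mul_sin_sq_two_pi :
    ∫ θ in (0:ℝ)..(2 * π), cos θ ^ 2 * sin θ ^ 2 = π / 4 := by
  have h : sin (4 * (2 * π)) = 0 := by
    rw [← mul_assoc]; exact_mod_cast sin_nat_mul_pi 8
  simp [mul_comm (cos _ ^ 2), h]
  ring

/-- With `v₂ θ = λ₁ ∫₀^θ cos s sin² s ds`, `v₃ 0 = 0` and
`v₃' θ = λ₁ cos θ sin θ (cos θ · v₂' θ + 2 sin θ · v₂ θ) + λ₂ cos²θ sin²θ`,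
one has `v₃ (2π) = c₃ λ₂` where `c₃ = ∫₀^{2π} cos²θ sin²θ dθ = π/4 ≠ 0`. -/
theorem v3_at_two_pi (lam₁ lam₂ : ℝ) (v₂ v₃ : ℝ → ℝ)
    (hv₂ : ∀ θ, v₂ θ = lam₁ * ∫ s in (0:ℝ)..θ, cos s * (sin s) ^ 2)
    (hv₃0 : v₃ 0 = 0)
    (hv₃ : ∀ θ, HasDerivAt v₃
      (lam₁ * cos θ * sin θ * (cos θ * deriv v₂ θ + 2 * sin θ * v₂ θ)
        + lam₂ * (cos θ) ^ 2 * (sin θ) ^ 2) θ) :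
    v₃ (2 * π) = (∫ θ in (0:ℝ)..(2 * π), (cos θ) ^ 2 * (sin θ) ^ 2) * lam₂ ∧
      (∫ θ in (0:ℝ)..(2 * π), (cos θ) ^ 2 * (sin θ) ^ 2) = π / 4 ∧
      (∫ θ in (0:ℝ)..(2 * π), (cos θ) ^ 2 * (sin θ) ^ 2) ≠ 0 := by
  have hv₂_eq : v₂ = fun θ => lam₁ * (sin θ ^ 3 / 3) := by
    ext θ; rw [hv₂, integral_cos_mul_sin_sq]
  have hv₂' : ∀ θ, HasDerivAt v₂ (lam₁ * (cos θ * sin θ ^ 2)) θ := by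
    intro θ
    rw [hv₂_eq]
    exact (((hasDerivAt_sin θ).pow 3).div_const 3).const_mul lam₁ |>.congr_deriv (by ring)
  have hv₃' : ∀ θ, HasDerivAt v₃ (lam₁ ^ 2 * ((sin θ ^ 3 - sin θ ^ 5 / 3) * cos θ)
      + lam₂ * (cos θ ^ 2 * sin θ ^ 2)) θ := by
    intro θ
    convert hv₃ θ using 1
    rw [(hv₂' θ).deriv, hv₂_eq]
    linear_combination (-lam₁ ^ 2 * cos θ * sin θ ^ 3) * sin_sq_add_cos_sq θ
  have hv₃_two_pi := integral_eq_sub_of_hasDerivAt (fun θ _ => hv₃' θ)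
    (Continuous.intervalIntegrable (by fun_prop) 0 (2 * π))
  have hperiod := integral_comp_sin_mul_cos_of_sin_eq (g := fun u => u ^ 3 - u ^ 5 / 3)
    (a := 0) (b := 2 * π) (by fun_prop) (by simp)
  rw [integral_add (Continuous.intervalIntegrable (by fun_prop) _ _)
      (Continuous.intervalIntegrable (by fun_prop) _ _),
    integral_const_mul, integral_const_mul, hperiod, hv₃0,
    integral_cos_sq_mul_sin_sq_two_pi] at hv₃_two_pi
  rw [integral_cos_sq_mul_sin_sq_two_pi]
  exact ⟨by linarith, rfl, by positivity⟩
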